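/- Fix integers a < c and consider N_{c+1}^{a,c,c}-bootstrap percolation (the case b = c > a). Fix l, w ≥ c and let I = I•([l]×[w]²). There exists a constant δ > 0 depending only on a and c such that for all sufficiently small p > 0: (i) ℙ_p(I•([l]×[w+1]²) | I) ≥ (1 − e^{−p·l·w})², and (ii) ℙ_p(I•([l+1]×[w]²) | I) ≥ 1 − exp(−δ·p^{c(c+1)/2}·w²). -/

import Mathlib

open scoped Classical

/-- Vertices of the three-dimensional lattice. -/
abbrev V3 : Type := ℤ × ℤ × ℤ

/-- The anisotropic neighbourhood `N_{a,b,c} ⊂ ℤ³`: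
nonzero multiples of `e₁` up to `a`, of `e₂` up to `b`, of `e₃` up to `c`. -/
def N3 (a b c : ℕ) : Set V3 :=
  {u | (u.1 ≠ 0 ∧ |u.1| ≤ (a : ℤ) ∧ u.2.1 = 0 ∧ u.2.2 = 0) ∨
       (u.2.1 ≠ 0 ∧ |u.2.1| ≤ (b : ℤ) ∧ u.1 = 0 ∧ u.2.2 = 0) ∨
       (u.2.2 ≠ 0 ∧ |u.2.2| ≤ (c : ℤ) ∧ u.1 = 0 ∧ u.2.1 = 0)}

/-- One step of the `r`-neighbour bootstrap dynamics inside the region `dom`: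
a healthy vertex of `dom` becomes infected when it has at least `r` infected
neighbours (its neighbours being its translates by `N_{a,b,c}`). -/
def step3 (a b c r : ℕ) (dom S : Set V3) : Set V3 :=
  S ∪ {x | x ∈ dom ∧ r ≤ {u | u ∈ N3 a b c ∧ x + u ∈ S}.ncard}

/-- The closure `⟨A⟩` of `A` under the `N_r^{a,b,c}`-bootstrap process in `dom`. -/
def closure3 (a b c r : ℕ) (dom A : Set V3) : Set V3 :=
  ⋃ n, (step3 a b c r dom)^[n] (A ∩ dom)

/-- The rectangle `[x]×[y]×[z]` as a finset of `ℤ³`. -/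
noncomputable def rectF (x y z : ℕ) : Finset V3 :=
  Finset.Icc (1 : ℤ) (x : ℤ) ×ˢ (Finset.Icc (1 : ℤ) (y : ℤ) ×ˢ Finset.Icc (1 : ℤ) (z : ℤ))

/-- The rectangle `[x]×[y]×[z]` as a set. -/
def rect (x y z : ℕ) : Set V3 := ↑(rectF x y z)

/-- The event `I•(R)`: the region `R` is internally filled by the initial set `A`,
i.e. `R ⊆ ⟨A ∩ R⟩` for the process restricted to `R`. -/
def IFill (a b c r : ℕ) (R : Set V3) (A : Finset V3) : Prop :=
  R ⊆ closure3 a b c r R ↑A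

/-- The probability of the event `E` under the Bernoulli product measure with
density `p` on subsets of the finite vertex set `D`. -/
noncomputable def PP {α : Type*} [DecidableEq α] (D : Finset α) (p : ℝ)
    (E : Finset α → Prop) : ℝ :=
  ∑ A ∈ D.powerset, if E A then p ^ A.card * (1 - p) ^ (D.card - A.card) else 0

/-- Conditional probability `ℙ_p(E | F)`. -/
noncomputable def PPc {α : Type*} [DecidableEq α] (D : Finset α) (p : ℝ)
    (E F : Finset α → Prop) : ℝ :=
  PP D p (fun A => E A ∧ F A) / PP D p F

section Basic

variable {a b c r : ℕ} {dom dom' A A' S S' : Set V3}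

lemma N3_finite (a b c : ℕ) : (N3 a b c).Finite := by
  have hsub : N3 a b c ⊆ (Set.Icc (-(a:ℤ)-b-c) ((a:ℤ)+b+c)) ×ˢ
      ((Set.Icc (-(a:ℤ)-b-c) ((a:ℤ)+b+c)) ×ˢ (Set.Icc (-(a:ℤ)-b-c) ((a:ℤ)+b+c))) := by
    rintro ⟨u1, u2, u3⟩ h
    rcases h with ⟨h1, h2, h3, h4⟩ | ⟨h1, h2, h3, h4⟩ | ⟨h1, h2, h3, h4⟩ <;>
      simp only [Set.mem_prod, Set.mem_Icc] <;> rw [abs_le] at h2 <;>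
      simp only at * <;> omega
  exact Set.Finite.subset ((Set.finite_Icc _ _).prod ((Set.finite_Icc _ _).prod
    (Set.finite_Icc _ _))) hsub

lemma nbrs_finite (x : V3) (S : Set V3) : {u | u ∈ N3 a b c ∧ x + u ∈ S}.Finite :=
  (N3_finite a b c).subset (fun _ h => h.1)

lemma subset_closure3 : A ∩ dom ⊆ closure3 a b c r dom A := by
  intro x hx
  exact Set.mem_iUnion.2 ⟨0, hx⟩

lemma step3_mono (hd : dom ⊆ dom') (hs : S ⊆ S') :
    step3 a b c r dom S ⊆ step3 a b c r dom' S' := by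
  rintro x (hx | ⟨hx1, hx2⟩)
  · exact Or.inl (hs hx)
  · refine Or.inr ⟨hd hx1, le_trans hx2 ?_⟩
    exact Set.ncard_le_ncard (fun u hu => ⟨hu.1, hs hu.2⟩) (nbrs_finite x S')

lemma subset_step3 : S ⊆ step3 a b c r dom S := Set.subset_union_left

lemma iterate_step3_mono (hd : dom ⊆ dom') :
    ∀ n : ℕ, ∀ S S' : Set V3, S ⊆ S' →
      (step3 a b c r dom)^[n] S ⊆ (step3 a b c r dom')^[n] S' := by
  intro n
  induction n with
  | zero => exact fun S S' hs => hs
  | succ n ih =>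
      intro S S' hs
      rw [Function.iterate_succ_apply, Function.iterate_succ_apply]
      exact ih _ _ (step3_mono hd hs)

lemma closure3_mono (hd : dom ⊆ dom') (hA : A ∩ dom ⊆ A' ∩ dom') :
    closure3 a b c r dom A ⊆ closure3 a b c r dom' A' := by
  refine Set.iUnion_subset fun n => ?_
  intro x hx
  exact Set.mem_iUnion.2 ⟨n, iterate_step3_mono hd n _ _ hA hx⟩

lemma iterate_le_iterate (m n : ℕ) (hmn : m ≤ n) :
    (step3 a b c r dom)^[m] S ⊆ (step3 a b c r dom)^[n] S := by
  induction n with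
  | zero => simpa [Nat.le_zero.mp hmn] using subset_rfl
  | succ n ih =>
      rcases Nat.lt_or_ge m (n+1) with h | h
      · refine subset_trans (ih (Nat.lt_succ_iff.mp h)) ?_
        rw [Function.iterate_succ_apply']
        exact subset_step3
      · have : m = n + 1 := le_antisymm hmn h
        simp [this]

lemma closure3_closed {x : V3} (hx : x ∈ dom)
    (hn : r ≤ {u | u ∈ N3 a b c ∧ x + u ∈ closure3 a b c r dom A}.ncard) :
    x ∈ closure3 a b c r dom A := by
  classical
  set T := {u | u ∈ N3 a b c ∧ x + u ∈ closure3 a b c r dom A} with hT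
  have hTfin : T.Finite := nbrs_finite x _
  have hchoice : ∀ u ∈ hTfin.toFinset, ∃ n : ℕ,
      x + u ∈ (step3 a b c r dom)^[n] (A ∩ dom) := by
    intro u hu
    rw [Set.Finite.mem_toFinset] at hu
    exact Set.mem_iUnion.1 hu.2
  choose f hf using hchoice
  set N := hTfin.toFinset.sup (fun u => if h : u ∈ hTfin.toFinset then f u h else 0) with hN
  have hall : ∀ u ∈ hTfin.toFinset, x + u ∈ (step3 a b c r dom)^[N] (A ∩ dom) := by
    intro u hu
    refine iterate_le_iterate (f u hu) N ?_ (hf u hu)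
    have h2 : (if h : u ∈ hTfin.toFinset then f u h else 0) = f u hu := dif_pos hu
    rw [hN, ← h2]
    exact Finset.le_sup (f := fun u => if h : u ∈ hTfin.toFinset then f u h else 0) hu
  have hsub : T ⊆ {u | u ∈ N3 a b c ∧ x + u ∈ (step3 a b c r dom)^[N] (A ∩ dom)} := by
    intro u hu
    exact ⟨hu.1, hall u (hTfin.mem_toFinset.2 hu)⟩
  have hcard : r ≤ {u | u ∈ N3 a b c ∧ x + u ∈ (step3 a b c r dom)^[N] (A ∩ dom)}.ncard :=
    le_trans hn (Set.ncard_le_ncard hsub (nbrs_finite x _))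
  have : x ∈ (step3 a b c r dom)^[N+1] (A ∩ dom) := by
    rw [Function.iterate_succ_apply']
    exact Or.inr ⟨hx, hcard⟩
  exact Set.mem_iUnion.2 ⟨N+1, this⟩

lemma grow_step {x : V3} (hx : x ∈ dom) (U : Finset V3) (hr : r ≤ U.card)
    (hU : ∀ u ∈ U, u ∈ N3 a b c ∧ x + u ∈ closure3 a b c r dom A) :
    x ∈ closure3 a b c r dom A := by
  refine closure3_closed hx (le_trans hr ?_)
  have h1 : (↑U : Set V3) ⊆ {u | u ∈ N3 a b c ∧ x + u ∈ closure3 a b c r dom A} :=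
    fun u hu => hU u hu
  calc (U.card : ℕ) = (↑U : Set V3).ncard := (Set.ncard_coe_finset U).symm
    _ ≤ _ := Set.ncard_le_ncard h1 (nbrs_finite x _)

end Basic
section Offs

/-- The vector `k` times the `d`-th basis vector. -/
def offv (d : ℕ) (k : ℤ) : V3 := if d = 0 then (k,0,0) else if d = 1 then (0,k,0) else (0,0,k)

/-- Offsets `s*1, ..., s*m` in direction `d`. -/
noncomputable def offs (d : ℕ) (s m : ℤ) : Finset V3 := (Finset.Icc 1 m).image (fun k => offv d (s*k))

lemma offv_inj {d : ℕ} {x y : ℤ} (h : offv d x = offv d y) : x = y := by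
  unfold offv at h
  split_ifs at h <;> simpa [Prod.ext_iff] using h

lemma card_offs {d : ℕ} {s : ℤ} (hs : s = 1 ∨ s = -1) (m : ℤ) :
    (offs d s m).card = m.toNat := by
  rw [offs, Finset.card_image_of_injective, Int.card_Icc]
  · simp
  · intro x y h
    have := offv_inj h
    rcases hs with h' | h' <;> subst h' <;> omega

lemma mem_offs {d : ℕ} {s m : ℤ} {u : V3} :
    u ∈ offs d s m ↔ ∃ k, 1 ≤ k ∧ k ≤ m ∧ u = offv d (s*k) := by
  simp only [offs, Finset.mem_image, Finset.mem_Icc]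
  constructor
  · rintro ⟨k, ⟨h1, h2⟩, h3⟩; exact ⟨k, h1, h2, h3.symm⟩
  · rintro ⟨k, h1, h2, h3⟩; exact ⟨k, ⟨h1, h2⟩, h3.symm⟩

lemma offs_disj {d d' : ℕ} {s s' m m' : ℤ} (hd : d < 3) (hd' : d' < 3)
    (hs : s = 1 ∨ s = -1) (hs' : s' = 1 ∨ s' = -1) (hne : d ≠ d' ∨ s ≠ s') :
    Disjoint (offs d s m) (offs d' s' m') := by
  rw [Finset.disjoint_left]
  intro u hu hu'
  rw [mem_offs] at hu hu'
  obtain ⟨k, hk1, hk2, hk3⟩ := hu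
  obtain ⟨k', hk1', hk2', hk3'⟩ := hu'
  subst hk3
  rcases hs with h | h <;> rcases hs' with h' | h' <;> subst h <;> subst h' <;>
    interval_cases d <;> interval_cases d' <;>
    simp [offv, Prod.ext_iff] at hk3' <;> omega

end Offs
section GrowGeneric


lemma N3_mem1 {a b c : ℕ} {k : ℤ} (h0 : k ≠ 0) (hk : |k| ≤ (a:ℤ)) :
    ((k,0,0) : V3) ∈ N3 a b c := Or.inl ⟨h0, hk, rfl, rfl⟩

lemma N3_mem2 {a b c : ℕ} {k : ℤ} (h0 : k ≠ 0) (hk : |k| ≤ (b:ℤ)) :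
    ((0,k,0) : V3) ∈ N3 a b c := Or.inr (Or.inl ⟨h0, hk, rfl, rfl⟩)

lemma N3_mem3 {a b c : ℕ} {k : ℤ} (h0 : k ≠ 0) (hk : |k| ≤ (c:ℤ)) :
    ((0,0,k) : V3) ∈ N3 a b c := Or.inr (Or.inr ⟨h0, hk, rfl, rfl⟩)

variable {a b c r : ℕ} {dom A : Set V3}

lemma grow_generic (x : V3) (hx : x ∈ dom)
    (t1 u1 t2 u2 t3 u3 : ℤ)
    (ht1 : t1 ≤ a) (hu1 : u1 ≤ a) (ht2 : t2 ≤ b) (hu2 : u2 ≤ b)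
    (ht3 : t3 ≤ c) (hu3 : u3 ≤ c)
    (hr : r ≤ t1.toNat + u1.toNat + t2.toNat + u2.toNat + t3.toNat + u3.toNat)
    (c1 : ∀ k : ℤ, 1 ≤ k → k ≤ t1 → x + (-k, 0, 0) ∈ closure3 a b c r dom A)
    (c2 : ∀ k : ℤ, 1 ≤ k → k ≤ u1 → x + (k, 0, 0) ∈ closure3 a b c r dom A)
    (c3 : ∀ k : ℤ, 1 ≤ k → k ≤ t2 → x + (0, -k, 0) ∈ closure3 a b c r dom A)
    (c4 : ∀ k : ℤ, 1 ≤ k → k ≤ u2 → x + (0, k, 0) ∈ closure3 a b c r dom A)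
    (c5 : ∀ k : ℤ, 1 ≤ k → k ≤ t3 → x + (0, 0, -k) ∈ closure3 a b c r dom A)
    (c6 : ∀ k : ℤ, 1 ≤ k → k ≤ u3 → x + (0, 0, k) ∈ closure3 a b c r dom A) :
    x ∈ closure3 a b c r dom A := by
  set U : Finset V3 := offs 0 (-1) t1 ∪ offs 0 1 u1 ∪ offs 1 (-1) t2 ∪ offs 1 1 u2 ∪
    offs 2 (-1) t3 ∪ offs 2 1 u3 with hU
  have hone : (1:ℤ) = 1 ∨ (1:ℤ) = -1 := Or.inl rfl
  have hmone : (-1:ℤ) = 1 ∨ (-1:ℤ) = -1 := Or.inr rfl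
  have d12 : Disjoint (offs 0 (-1) t1) (offs 0 1 u1) :=
    offs_disj (by norm_num) (by norm_num) hmone hone (by norm_num)
  have d13 : Disjoint (offs 0 (-1) t1) (offs 1 (-1) t2) :=
    offs_disj (by norm_num) (by norm_num) hmone hmone (by norm_num)
  have d14 : Disjoint (offs 0 (-1) t1) (offs 1 1 u2) :=
    offs_disj (by norm_num) (by norm_num) hmone hone (by norm_num)
  have d15 : Disjoint (offs 0 (-1) t1) (offs 2 (-1) t3) :=
    offs_disj (by norm_num) (by norm_num) hmone hmone (by norm_num)
  have d16 : Disjoint (offs 0 (-1) t1) (offs 2 1 u3) :=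
    offs_disj (by norm_num) (by norm_num) hmone hone (by norm_num)
  have d23 : Disjoint (offs 0 1 u1) (offs 1 (-1) t2) :=
    offs_disj (by norm_num) (by norm_num) hone hmone (by norm_num)
  have d24 : Disjoint (offs 0 1 u1) (offs 1 1 u2) :=
    offs_disj (by norm_num) (by norm_num) hone hone (by norm_num)
  have d25 : Disjoint (offs 0 1 u1) (offs 2 (-1) t3) :=
    offs_disj (by norm_num) (by norm_num) hone hmone (by norm_num)
  have d26 : Disjoint (offs 0 1 u1) (offs 2 1 u3) :=
    offs_disj (by norm_num) (by norm_num) hone hone (by norm_num)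
  have d34 : Disjoint (offs 1 (-1) t2) (offs 1 1 u2) :=
    offs_disj (by norm_num) (by norm_num) hmone hone (by norm_num)
  have d35 : Disjoint (offs 1 (-1) t2) (offs 2 (-1) t3) :=
    offs_disj (by norm_num) (by norm_num) hmone hmone (by norm_num)
  have d36 : Disjoint (offs 1 (-1) t2) (offs 2 1 u3) :=
    offs_disj (by norm_num) (by norm_num) hmone hone (by norm_num)
  have d45 : Disjoint (offs 1 1 u2) (offs 2 (-1) t3) :=
    offs_disj (by norm_num) (by norm_num) hone hmone (by norm_num)
  have d46 : Disjoint (offs 1 1 u2) (offs 2 1 u3) :=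
    offs_disj (by norm_num) (by norm_num) hone hone (by norm_num)
  have d56 : Disjoint (offs 2 (-1) t3) (offs 2 1 u3) :=
    offs_disj (by norm_num) (by norm_num) hmone hone (by norm_num)
  have hcard : U.card = t1.toNat + u1.toNat + t2.toNat + u2.toNat + t3.toNat + u3.toNat := by
    rw [hU]
    rw [Finset.card_union_of_disjoint (by
      simp only [Finset.disjoint_union_left]
      exact ⟨⟨⟨⟨d16, d26⟩, d36⟩, d46⟩, d56⟩)]
    rw [Finset.card_union_of_disjoint (by
      simp only [Finset.disjoint_union_left]
      exact ⟨⟨⟨d15, d25⟩, d35⟩, d45⟩)]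
    rw [Finset.card_union_of_disjoint (by
      simp only [Finset.disjoint_union_left]
      exact ⟨⟨d14, d24⟩, d34⟩)]
    rw [Finset.card_union_of_disjoint (by
      simp only [Finset.disjoint_union_left]
      exact ⟨d13, d23⟩)]
    rw [Finset.card_union_of_disjoint d12]
    rw [card_offs hmone, card_offs hone, card_offs hmone, card_offs hone,
      card_offs hmone, card_offs hone]
  refine grow_step hx U (by omega) ?_
  intro u hu
  rw [hU] at hu
  simp only [Finset.mem_union] at hu
  rcases hu with ((((hu | hu) | hu) | hu) | hu) | hu <;>
    rw [mem_offs] at hu <;> obtain ⟨k, hk1, hk2, hk3⟩ := hu <;> subst hk3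
  · have he : offv 0 (-1*k) = ((-k, 0, 0) : V3) := by norm_num [offv]
    rw [he]
    exact ⟨N3_mem1 (by omega) (abs_le.2 ⟨by omega, by omega⟩), c1 k hk1 hk2⟩
  · have he : offv 0 (1*k) = ((k, 0, 0) : V3) := by norm_num [offv]
    rw [he]
    exact ⟨N3_mem1 (by omega) (abs_le.2 ⟨by omega, by omega⟩), c2 k hk1 hk2⟩
  · have he : offv 1 (-1*k) = ((0, -k, 0) : V3) := by norm_num [offv]
    rw [he]
    exact ⟨N3_mem2 (by omega) (abs_le.2 ⟨by omega, by omega⟩), c3 k hk1 hk2⟩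
  · have he : offv 1 (1*k) = ((0, k, 0) : V3) := by norm_num [offv]
    rw [he]
    exact ⟨N3_mem2 (by omega) (abs_le.2 ⟨by omega, by omega⟩), c4 k hk1 hk2⟩
  · have he : offv 2 (-1*k) = ((0, 0, -k) : V3) := by norm_num [offv]
    rw [he]
    exact ⟨N3_mem3 (by omega) (abs_le.2 ⟨by omega, by omega⟩), c5 k hk1 hk2⟩
  · have he : offv 2 (1*k) = ((0, 0, k) : V3) := by norm_num [offv]
    rw [he]
    exact ⟨N3_mem3 (by omega) (abs_le.2 ⟨by omega, by omega⟩), c6 k hk1 hk2⟩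

end GrowGeneric

section Geometry

lemma padd (x1 x2 x3 y1 y2 y3 : ℤ) :
    ((x1,x2,x3) : V3) + (y1,y2,y3) = (x1+y1, x2+y2, x3+y3) := rfl

lemma tup_eq {a1 a2 a3 b1 b2 b3 : ℤ} (h1 : a1 = b1) (h2 : a2 = b2) (h3 : a3 = b3) :
    ((a1,a2,a3):V3) = (b1,b2,b3) := by rw [h1, h2, h3]

lemma mem_of_eq {S : Set V3} {v v' : V3} (h : v = v') (hv : v' ∈ S) : v ∈ S := h ▸ hv

lemma mem_rect {x y z : ℕ} {v1 v2 v3 : ℤ} :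
    ((v1, v2, v3) : V3) ∈ rect x y z ↔
      1 ≤ v1 ∧ v1 ≤ (x:ℤ) ∧ 1 ≤ v2 ∧ v2 ≤ (y:ℤ) ∧ 1 ≤ v3 ∧ v3 ≤ (z:ℤ) := by
  simp only [rect, Finset.mem_coe, rectF, Finset.mem_product, Finset.mem_Icc]
  omega

lemma int_ud (P : ℤ → Prop) (z₀ lo hi : ℤ) (hlo : lo ≤ z₀) (hhi : z₀ ≤ hi) (h0 : P z₀)
    (hup : ∀ z, z₀ ≤ z → z < hi → P z → P (z+1))
    (hdn : ∀ z, z ≤ z₀ → lo < z → P z → P (z-1)) :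
    ∀ z, lo ≤ z → z ≤ hi → P z := by
  have hu : ∀ n : ℕ, z₀ + n ≤ hi → P (z₀ + n) := by
    intro n
    induction n with
    | zero => intro _; simpa using h0
    | succ n ih =>
        intro h
        have e : z₀ + ((n:ℤ)+1) = (z₀ + n) + 1 := by ring
        push_cast at h ⊢
        rw [e]
        refine hup _ (by omega) (by omega) (ih (by omega))
  have hd : ∀ n : ℕ, lo ≤ z₀ - n → P (z₀ - n) := by
    intro n
    induction n with
    | zero => intro _; simpa using h0
    | succ n ih =>
        intro h
        have e : z₀ - ((n:ℤ)+1) = (z₀ - n) - 1 := by ring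
        push_cast at h ⊢
        rw [e]
        refine hdn _ (by omega) (by omega) (ih (by omega))
  intro z h1 h2
  rcases le_or_gt z₀ z with h | h
  · have e : z = z₀ + ((z - z₀).toNat : ℤ) := by omega
    rw [e]
    exact hu _ (by omega)
  · have e : z = z₀ - ((z₀ - z).toNat : ℤ) := by omega
    rw [e]
    exact hd _ (by omega)

lemma fill_i (a c l w : ℕ) (ha : 1 ≤ a) (hac : a < c) (hl : c ≤ l) (hw : c ≤ w)
    (A : Set V3) (x₂ z₂ x₃ y₃ : ℤ)
    (hx₂ : 1 ≤ x₂) (hx₂' : x₂ ≤ l) (hz₂ : 1 ≤ z₂) (hz₂' : z₂ ≤ w)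
    (hx₃ : 1 ≤ x₃) (hx₃' : x₃ ≤ l) (hy₃ : 1 ≤ y₃) (hy₃' : y₃ ≤ w)
    (hrect : rect l w w ⊆ closure3 a c c (c+1) (rect l (w+1) (w+1)) A)
    (hs2 : ((x₂, (w:ℤ)+1, z₂) : V3) ∈ closure3 a c c (c+1) (rect l (w+1) (w+1)) A)
    (hs3 : ((x₃, y₃, (w:ℤ)+1) : V3) ∈ closure3 a c c (c+1) (rect l (w+1) (w+1)) A) :
    rect l (w+1) (w+1) ⊆ closure3 a c c (c+1) (rect l (w+1) (w+1)) A := by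
  have hdom : ∀ x y z : ℤ, 1 ≤ x → x ≤ l → 1 ≤ y → y ≤ (w:ℤ)+1 → 1 ≤ z → z ≤ (w:ℤ)+1 →
      ((x,y,z) : V3) ∈ rect l (w+1) (w+1) := by
    intro x y z h1 h2 h3 h4 h5 h6
    rw [mem_rect]
    push_cast
    omega
  have hrect' : ∀ x y z : ℤ, 1 ≤ x → x ≤ l → 1 ≤ y → y ≤ w → 1 ≤ z → z ≤ w →
      ((x,y,z):V3) ∈ closure3 a c c (c+1) (rect l (w+1) (w+1)) A := by
    intro x y z h1 h2 h3 h4 h5 h6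
    exact hrect (by rw [mem_rect]; omega)
  -- the line of the second slab through the seed
  have line2 : ∀ z : ℤ, 1 ≤ z → z ≤ w → ((x₂, (w:ℤ)+1, z) : V3) ∈ closure3 a c c (c+1) (rect l (w+1) (w+1)) A := by
    refine int_ud (fun z => ((x₂, (w:ℤ)+1, z) : V3) ∈ closure3 a c c (c+1) (rect l (w+1) (w+1)) A) z₂ 1 w hz₂ hz₂' hs2 ?_ ?_
    · intro z hz hz' hP
      refine grow_generic _ (hdom x₂ ((w:ℤ)+1) (z+1) hx₂ hx₂' (by omega) (by omega)
        (by omega) (by omega)) 0 0 c 0 1 0 (by omega) (by omega) (by omega) (by omega)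
        (by omega) (by omega) (by omega) ?_ ?_ ?_ ?_ ?_ ?_
      · intro k hk1 hk2; exfalso; omega
      · intro k hk1 hk2; exfalso; omega
      · intro k hk1 hk2
        rw [padd]
        exact mem_of_eq (tup_eq (by ring) (by ring) (by ring))
          (hrect' x₂ ((w:ℤ)+1-k) (z+1) hx₂ hx₂' (by omega) (by omega) (by omega) (by omega))
      · intro k hk1 hk2; exfalso; omega
      · intro k hk1 hk2
        have hk : k = 1 := by omega
        subst hk
        rw [padd]
        exact mem_of_eq (tup_eq (by ring) (by ring) (by ring)) hP
      · intro k hk1 hk2; exfalso; omega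
    · intro z hz hz' hP
      refine grow_generic _ (hdom x₂ ((w:ℤ)+1) (z-1) hx₂ hx₂' (by omega) (by omega)
        (by omega) (by omega)) 0 0 c 0 0 1 (by omega) (by omega) (by omega) (by omega)
        (by omega) (by omega) (by omega) ?_ ?_ ?_ ?_ ?_ ?_
      · intro k hk1 hk2; exfalso; omega
      · intro k hk1 hk2; exfalso; omega
      · intro k hk1 hk2
        rw [padd]
        exact mem_of_eq (tup_eq (by ring) (by ring) (by ring))
          (hrect' x₂ ((w:ℤ)+1-k) (z-1) hx₂ hx₂' (by omega) (by omega) (by omega) (by omega))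
      · intro k hk1 hk2; exfalso; omega
      · intro k hk1 hk2; exfalso; omega
      · intro k hk1 hk2
        have hk : k = 1 := by omega
        subst hk
        rw [padd]
        exact mem_of_eq (tup_eq (by ring) (by ring) (by ring)) hP
  -- the full second slab
  have slab2 : ∀ x z : ℤ, 1 ≤ x → x ≤ l → 1 ≤ z → z ≤ w → ((x, (w:ℤ)+1, z):V3) ∈ closure3 a c c (c+1) (rect l (w+1) (w+1)) A := by
    intro x z hx1 hx2 hz1 hz2''
    refine int_ud (fun x => ((x, (w:ℤ)+1, z):V3) ∈ closure3 a c c (c+1) (rect l (w+1) (w+1)) A) x₂ 1 l hx₂ hx₂'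
      (line2 z hz1 hz2'') ?_ ?_ x hx1 hx2
    · intro t ht ht' hP
      refine grow_generic _ (hdom (t+1) ((w:ℤ)+1) z (by omega) (by omega) (by omega)
        (by omega) (by omega) (by omega)) 1 0 c 0 0 0 (by omega) (by omega) (by omega)
        (by omega) (by omega) (by omega) (by omega) ?_ ?_ ?_ ?_ ?_ ?_
      · intro k hk1 hk2
        have hk : k = 1 := by omega
        subst hk
        rw [padd]
        exact mem_of_eq (tup_eq (by ring) (by ring) (by ring)) hP
      · intro k hk1 hk2; exfalso; omega
      · intro k hk1 hk2
        rw [padd]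
        exact mem_of_eq (tup_eq (by ring) (by ring) (by ring))
          (hrect' (t+1) ((w:ℤ)+1-k) z (by omega) (by omega) (by omega) (by omega)
            (by omega) (by omega))
      · intro k hk1 hk2; exfalso; omega
      · intro k hk1 hk2; exfalso; omega
      · intro k hk1 hk2; exfalso; omega
    · intro t ht ht' hP
      refine grow_generic _ (hdom (t-1) ((w:ℤ)+1) z (by omega) (by omega) (by omega)
        (by omega) (by omega) (by omega)) 0 1 c 0 0 0 (by omega) (by omega) (by omega)
        (by omega) (by omega) (by omega) (by omega) ?_ ?_ ?_ ?_ ?_ ?_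
      · intro k hk1 hk2; exfalso; omega
      · intro k hk1 hk2
        have hk : k = 1 := by omega
        subst hk
        rw [padd]
        exact mem_of_eq (tup_eq (by ring) (by ring) (by ring)) hP
      · intro k hk1 hk2
        rw [padd]
        exact mem_of_eq (tup_eq (by ring) (by ring) (by ring))
          (hrect' (t-1) ((w:ℤ)+1-k) z (by omega) (by omega) (by omega) (by omega)
            (by omega) (by omega))
      · intro k hk1 hk2; exfalso; omega
      · intro k hk1 hk2; exfalso; omega
      · intro k hk1 hk2; exfalso; omega
  -- the line of the third slab through the seed
  have line3 : ∀ y : ℤ, 1 ≤ y → y ≤ w → ((x₃, y, (w:ℤ)+1) : V3) ∈ closure3 a c c (c+1) (rect l (w+1) (w+1)) A := by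
    refine int_ud (fun y => ((x₃, y, (w:ℤ)+1) : V3) ∈ closure3 a c c (c+1) (rect l (w+1) (w+1)) A) y₃ 1 w hy₃ hy₃' hs3 ?_ ?_
    · intro z hz hz' hP
      refine grow_generic _ (hdom x₃ (z+1) ((w:ℤ)+1) hx₃ hx₃' (by omega) (by omega)
        (by omega) (by omega)) 0 0 1 0 c 0 (by omega) (by omega) (by omega) (by omega)
        (by omega) (by omega) (by omega) ?_ ?_ ?_ ?_ ?_ ?_
      · intro k hk1 hk2; exfalso; omega
      · intro k hk1 hk2; exfalso; omega
      · intro k hk1 hk2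
        have hk : k = 1 := by omega
        subst hk
        rw [padd]
        exact mem_of_eq (tup_eq (by ring) (by ring) (by ring)) hP
      · intro k hk1 hk2; exfalso; omega
      · intro k hk1 hk2
        rw [padd]
        exact mem_of_eq (tup_eq (by ring) (by ring) (by ring))
          (hrect' x₃ (z+1) ((w:ℤ)+1-k) hx₃ hx₃' (by omega) (by omega) (by omega) (by omega))
      · intro k hk1 hk2; exfalso; omega
    · intro z hz hz' hP
      refine grow_generic _ (hdom x₃ (z-1) ((w:ℤ)+1) hx₃ hx₃' (by omega) (by omega)
        (by omega) (by omega)) 0 0 0 1 c 0 (by omega) (by omega) (by omega) (by omega)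
        (by omega) (by omega) (by omega) ?_ ?_ ?_ ?_ ?_ ?_
      · intro k hk1 hk2; exfalso; omega
      · intro k hk1 hk2; exfalso; omega
      · intro k hk1 hk2; exfalso; omega
      · intro k hk1 hk2
        have hk : k = 1 := by omega
        subst hk
        rw [padd]
        exact mem_of_eq (tup_eq (by ring) (by ring) (by ring)) hP
      · intro k hk1 hk2
        rw [padd]
        exact mem_of_eq (tup_eq (by ring) (by ring) (by ring))
          (hrect' x₃ (z-1) ((w:ℤ)+1-k) hx₃ hx₃' (by omega) (by omega) (by omega) (by omega))
      · intro k hk1 hk2; exfalso; omega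
  -- the full third slab
  have slab3 : ∀ x y : ℤ, 1 ≤ x → x ≤ l → 1 ≤ y → y ≤ w → ((x, y, (w:ℤ)+1):V3) ∈ closure3 a c c (c+1) (rect l (w+1) (w+1)) A := by
    intro x y hx1 hx2 hy1 hy2
    refine int_ud (fun x => ((x, y, (w:ℤ)+1):V3) ∈ closure3 a c c (c+1) (rect l (w+1) (w+1)) A) x₃ 1 l hx₃ hx₃'
      (line3 y hy1 hy2) ?_ ?_ x hx1 hx2
    · intro t ht ht' hP
      refine grow_generic _ (hdom (t+1) y ((w:ℤ)+1) (by omega) (by omega) (by omega)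
        (by omega) (by omega) (by omega)) 1 0 0 0 c 0 (by omega) (by omega) (by omega)
        (by omega) (by omega) (by omega) (by omega) ?_ ?_ ?_ ?_ ?_ ?_
      · intro k hk1 hk2
        have hk : k = 1 := by omega
        subst hk
        rw [padd]
        exact mem_of_eq (tup_eq (by ring) (by ring) (by ring)) hP
      · intro k hk1 hk2; exfalso; omega
      · intro k hk1 hk2; exfalso; omega
      · intro k hk1 hk2; exfalso; omega
      · intro k hk1 hk2
        rw [padd]
        exact mem_of_eq (tup_eq (by ring) (by ring) (by ring))
          (hrect' (t+1) y ((w:ℤ)+1-k) (by omega) (by omega) (by omega) (by omega)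
            (by omega) (by omega))
      · intro k hk1 hk2; exfalso; omega
    · intro t ht ht' hP
      refine grow_generic _ (hdom (t-1) y ((w:ℤ)+1) (by omega) (by omega) (by omega)
        (by omega) (by omega) (by omega)) 0 1 0 0 c 0 (by omega) (by omega) (by omega)
        (by omega) (by omega) (by omega) (by omega) ?_ ?_ ?_ ?_ ?_ ?_
      · intro k hk1 hk2; exfalso; omega
      · intro k hk1 hk2
        have hk : k = 1 := by omega
        subst hk
        rw [padd]
        exact mem_of_eq (tup_eq (by ring) (by ring) (by ring)) hP
      · intro k hk1 hk2; exfalso; omega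
      · intro k hk1 hk2; exfalso; omega
      · intro k hk1 hk2
        rw [padd]
        exact mem_of_eq (tup_eq (by ring) (by ring) (by ring))
          (hrect' (t-1) y ((w:ℤ)+1-k) (by omega) (by omega) (by omega) (by omega)
            (by omega) (by omega))
      · intro k hk1 hk2; exfalso; omega
  -- the corner line
  have corner : ∀ x : ℤ, 1 ≤ x → x ≤ l → ((x, (w:ℤ)+1, (w:ℤ)+1):V3) ∈ closure3 a c c (c+1) (rect l (w+1) (w+1)) A := by
    intro x hx1 hx2
    refine grow_generic _ (hdom x ((w:ℤ)+1) ((w:ℤ)+1) hx1 hx2 (by omega) (by omega)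
      (by omega) (by omega)) 0 0 c 0 c 0 (by omega) (by omega) (by omega) (by omega)
      (by omega) (by omega) (by omega) ?_ ?_ ?_ ?_ ?_ ?_
    · intro k hk1 hk2; exfalso; omega
    · intro k hk1 hk2; exfalso; omega
    · intro k hk1 hk2
      rw [padd]
      exact mem_of_eq (tup_eq (by ring) (by ring) (by ring))
        (slab3 x ((w:ℤ)+1-k) hx1 hx2 (by omega) (by omega))
    · intro k hk1 hk2; exfalso; omega
    · intro k hk1 hk2
      rw [padd]
      exact mem_of_eq (tup_eq (by ring) (by ring) (by ring))
        (slab2 x ((w:ℤ)+1-k) hx1 hx2 (by omega) (by omega))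
    · intro k hk1 hk2; exfalso; omega
  -- conclusion
  rintro ⟨v1, v2, v3⟩ hv
  rw [mem_rect] at hv
  push_cast at hv
  rcases le_or_gt v2 (w:ℤ) with h2 | h2 <;> rcases le_or_gt v3 (w:ℤ) with h3 | h3
  · exact hrect' v1 v2 v3 (by omega) (by omega) (by omega) (by omega) (by omega) (by omega)
  · have e3 : v3 = (w:ℤ)+1 := by omega
    subst e3
    exact slab3 v1 v2 (by omega) (by omega) (by omega) (by omega)
  · have e2 : v2 = (w:ℤ)+1 := by omega
    subst e2
    exact slab2 v1 v3 (by omega) (by omega) (by omega) (by omega)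
  · have e2 : v2 = (w:ℤ)+1 := by omega
    have e3 : v3 = (w:ℤ)+1 := by omega
    subst e2
    subst e3
    exact corner v1 (by omega) (by omega)

end Geometry

section Geometry2

lemma fill_ii (a c l w : ℕ) (ha : 1 ≤ a) (hac : a < c) (hl : c ≤ l) (hw : c ≤ w)
    (A : Set V3) (y₀ z₀ : ℤ) (hy₀ : 1 ≤ y₀) (hy₀' : y₀ + c ≤ (w:ℤ) + 1)
    (hz₀ : 1 ≤ z₀) (hz₀' : z₀ + c ≤ (w:ℤ) + 1)
    (hrect : rect l w w ⊆ closure3 a c c (c+1) (rect (l+1) w w) A)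
    (hseed : ∀ y z : ℤ, y₀ ≤ y → z₀ ≤ z → (y - y₀) + (z - z₀) + a ≤ c →
      (((l:ℤ)+1, y, z) : V3) ∈ closure3 a c c (c+1) (rect (l+1) w w) A) :
    rect (l+1) w w ⊆ closure3 a c c (c+1) (rect (l+1) w w) A := by
  have hdom : ∀ x y z : ℤ, 1 ≤ x → x ≤ (l:ℤ)+1 → 1 ≤ y → y ≤ w → 1 ≤ z → z ≤ w →
      ((x,y,z) : V3) ∈ rect (l+1) w w := by
    intro x y z h1 h2 h3 h4 h5 h6
    rw [mem_rect]
    push_cast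
    omega
  have hrect' : ∀ x y z : ℤ, 1 ≤ x → x ≤ l → 1 ≤ y → y ≤ w → 1 ≤ z → z ≤ w →
      ((x,y,z):V3) ∈ closure3 a c c (c+1) (rect (l+1) w w) A := by
    intro x y z h1 h2 h3 h4 h5 h6
    exact hrect (by rw [mem_rect]; omega)
  have quad : ∀ d : ℕ, ∀ y z : ℤ, y₀ ≤ y → y ≤ w → z₀ ≤ z → z ≤ w →
      (y - y₀) + (z - z₀) = d → (((l:ℤ)+1, y, z) : V3) ∈ closure3 a c c (c+1) (rect (l+1) w w) A := by
    intro d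
    induction d using Nat.strong_induction_on with
    | _ d ih =>
      intro y z h1 h2 h3 h4 hd
      by_cases hsmall : (y - y₀) + (z - z₀) + a ≤ c
      · exact hseed y z h1 h3 hsmall
      · refine grow_generic _ (hdom ((l:ℤ)+1) y z (by omega) (by omega) (by omega)
          (by omega) (by omega) (by omega)) a 0 (min (y-y₀) (c:ℤ)) 0 (min (z-z₀) (c:ℤ)) 0
          (by omega) (by omega) (by omega) (by omega) (by omega) (by omega) (by omega)
          ?_ ?_ ?_ ?_ ?_ ?_
        · intro k hk1 hk2
          rw [padd]
          exact mem_of_eq (tup_eq (by ring) (by ring) (by ring))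
            (hrect' ((l:ℤ)+1-k) y z (by omega) (by omega) (by omega) (by omega)
              (by omega) (by omega))
        · intro k hk1 hk2; exfalso; omega
        · intro k hk1 hk2
          rw [padd]
          exact mem_of_eq (tup_eq (by ring) (by ring) (by ring))
            (ih ((y-k-y₀)+(z-z₀)).toNat (by omega) (y-k) z (by omega) (by omega)
              (by omega) (by omega) (by omega))
        · intro k hk1 hk2; exfalso; omega
        · intro k hk1 hk2
          rw [padd]
          exact mem_of_eq (tup_eq (by ring) (by ring) (by ring))
            (ih ((y-y₀)+(z-k-z₀)).toNat (by omega) y (z-k) (by omega) (by omega)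
              (by omega) (by omega) (by omega))
        · intro k hk1 hk2; exfalso; omega
  have quadall : ∀ y z : ℤ, y₀ ≤ y → y ≤ w → z₀ ≤ z → z ≤ w →
      (((l:ℤ)+1, y, z) : V3) ∈ closure3 a c c (c+1) (rect (l+1) w w) A :=
    fun y z h1 h2 h3 h4 => quad ((y-y₀)+(z-z₀)).toNat y z h1 h2 h3 h4 (by omega)
  have Qn : ∀ n : ℕ, ∀ y z : ℤ, y₀ - n ≤ y → 1 ≤ y → y ≤ w → z₀ ≤ z → z ≤ w →
      (((l:ℤ)+1, y, z) : V3) ∈ closure3 a c c (c+1) (rect (l+1) w w) A := by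
    intro n
    induction n with
    | zero =>
        intro y z h1 h2 h3 h4 h5
        exact quadall y z (by omega) h3 h4 h5
    | succ n ih =>
        intro y z h1 h2 h3 h4 h5
        rcases le_or_gt (y₀ - n) y with h | h
        · exact ih y z h h2 h3 h4 h5
        · refine grow_generic _ (hdom ((l:ℤ)+1) y z (by omega) (by omega) (by omega)
            (by omega) (by omega) (by omega)) a 0 0 c 0 0
            (by omega) (by omega) (by omega) (by omega) (by omega) (by omega) (by omega)
            ?_ ?_ ?_ ?_ ?_ ?_
          · intro k hk1 hk2
            rw [padd]
            exact mem_of_eq (tup_eq (by ring) (by ring) (by ring))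
              (hrect' ((l:ℤ)+1-k) y z (by omega) (by omega) (by omega) (by omega)
                (by omega) (by omega))
          · intro k hk1 hk2; exfalso; omega
          · intro k hk1 hk2; exfalso; omega
          · intro k hk1 hk2
            rw [padd]
            exact mem_of_eq (tup_eq (by ring) (by ring) (by ring))
              (ih (y+k) z (by omega) (by omega) (by omega) (by omega) (by omega))
          · intro k hk1 hk2; exfalso; omega
          · intro k hk1 hk2; exfalso; omega
  have rows : ∀ y z : ℤ, 1 ≤ y → y ≤ w → z₀ ≤ z → z ≤ w →
      (((l:ℤ)+1, y, z) : V3) ∈ closure3 a c c (c+1) (rect (l+1) w w) A := by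
    intro y z h1 h2 h3 h4
    exact Qn (y₀ - 1).toNat y z (by omega) h1 h2 h3 h4
  have Rn : ∀ n : ℕ, ∀ y z : ℤ, z₀ - n ≤ z → 1 ≤ y → y ≤ w → 1 ≤ z → z ≤ w →
      (((l:ℤ)+1, y, z) : V3) ∈ closure3 a c c (c+1) (rect (l+1) w w) A := by
    intro n
    induction n with
    | zero =>
        intro y z h1 h2 h3 h4 h5
        exact rows y z h2 h3 (by omega) h5
    | succ n ih =>
        intro y z h1 h2 h3 h4 h5
        rcases le_or_gt (z₀ - n) z with h | h
        · exact ih y z h h2 h3 h4 h5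
        · refine grow_generic _ (hdom ((l:ℤ)+1) y z (by omega) (by omega) (by omega)
            (by omega) (by omega) (by omega)) a 0 0 0 0 c
            (by omega) (by omega) (by omega) (by omega) (by omega) (by omega) (by omega)
            ?_ ?_ ?_ ?_ ?_ ?_
          · intro k hk1 hk2
            rw [padd]
            exact mem_of_eq (tup_eq (by ring) (by ring) (by ring))
              (hrect' ((l:ℤ)+1-k) y z (by omega) (by omega) (by omega) (by omega)
                (by omega) (by omega))
          · intro k hk1 hk2; exfalso; omega
          · intro k hk1 hk2; exfalso; omega
          · intro k hk1 hk2; exfalso; omega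
          · intro k hk1 hk2; exfalso; omega
          · intro k hk1 hk2
            rw [padd]
            exact mem_of_eq (tup_eq (by ring) (by ring) (by ring))
              (ih y (z+k) (by omega) (by omega) (by omega) (by omega) (by omega))
  have allpts : ∀ y z : ℤ, 1 ≤ y → y ≤ w → 1 ≤ z → z ≤ w →
      (((l:ℤ)+1, y, z) : V3) ∈ closure3 a c c (c+1) (rect (l+1) w w) A := by
    intro y z h1 h2 h3 h4
    exact Rn (z₀ - 1).toNat y z (by omega) h1 h2 h3 h4
  rintro ⟨v1, v2, v3⟩ hv
  rw [mem_rect] at hv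
  push_cast at hv
  rcases le_or_gt v1 (l:ℤ) with h | h
  · exact hrect' v1 v2 v3 (by omega) (by omega) (by omega) (by omega) (by omega) (by omega)
  · have e : v1 = (l:ℤ)+1 := by omega
    subst e
    exact allpts v2 v3 (by omega) (by omega) (by omega) (by omega)

end Geometry2
section Prob

variable {α : Type*} [DecidableEq α]

/-- Weight of a configuration. -/
noncomputable def wt (D : Finset α) (p : ℝ) (A : Finset α) : ℝ :=
  p ^ A.card * (1 - p) ^ (D.card - A.card)

lemma PP_eq (D : Finset α) (p : ℝ) (E : Finset α → Prop) :
    PP D p E = ∑ A ∈ D.powerset, if E A then wt D p A else 0 := rfl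

variable {D S T B C : Finset α} {p : ℝ} {E F E' : Finset α → Prop}

lemma wt_nonneg (h0 : 0 ≤ p) (h1 : p ≤ 1) (A : Finset α) : 0 ≤ wt D p A := by
  have h : (0:ℝ) ≤ 1 - p := by linarith
  exact mul_nonneg (pow_nonneg h0 _) (pow_nonneg h _)

lemma wt_pos (h0 : 0 < p) (h1 : p < 1) (A : Finset α) : 0 < wt D p A := by
  have h : (0:ℝ) < 1 - p := by linarith
  exact mul_pos (pow_pos h0 _) (pow_pos h _)

lemma sum_wt (p : ℝ) (D : Finset α) : ∑ A ∈ D.powerset, wt D p A = 1 := by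
  classical
  induction D using Finset.induction_on with
  | empty => simp [wt]
  | @insert a s ha ih =>
      rw [Finset.sum_powerset_insert ha]
      have h1 : ∀ A ∈ s.powerset, wt (insert a s) p A = (1-p) * wt s p A := by
        intro A hA
        rw [Finset.mem_powerset] at hA
        have hc : A.card ≤ s.card := Finset.card_le_card hA
        rw [wt, wt, Finset.card_insert_of_notMem ha,
          show s.card + 1 - A.card = (s.card - A.card) + 1 by omega, pow_succ]
        ring
      have h2 : ∀ A ∈ s.powerset, wt (insert a s) p (insert a A) = p * wt s p A := by
        intro A hA
        rw [Finset.mem_powerset] at hA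
        have hc : A.card ≤ s.card := Finset.card_le_card hA
        have haA : a ∉ A := fun h => ha (hA h)
        rw [wt, wt, Finset.card_insert_of_notMem ha, Finset.card_insert_of_notMem haA,
          show s.card + 1 - (A.card + 1) = s.card - A.card by omega, pow_succ]
        ring
      rw [Finset.sum_congr rfl h1, Finset.sum_congr rfl h2, ← Finset.mul_sum, ← Finset.mul_sum,
        ih]
      ring

lemma PP_nonneg (h0 : 0 ≤ p) (h1 : p ≤ 1) : 0 ≤ PP D p E := by
  rw [PP_eq]
  exact Finset.sum_nonneg fun A _ => by
    split_ifs
    · exact wt_nonneg h0 h1 A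
    · exact le_refl 0

lemma PP_congr (h : ∀ A ∈ D.powerset, (E A ↔ E' A)) : PP D p E = PP D p E' := by
  rw [PP_eq, PP_eq]
  exact Finset.sum_congr rfl fun A hA => if_congr (h A hA) rfl rfl

lemma PP_true : PP D p (fun _ => True) = 1 := by
  rw [PP_eq]
  simp only [if_pos trivial]
  exact sum_wt p D

lemma PP_mono (h0 : 0 ≤ p) (h1 : p ≤ 1) (h : ∀ A ∈ D.powerset, E A → E' A) :
    PP D p E ≤ PP D p E' := by
  rw [PP_eq, PP_eq]
  refine Finset.sum_le_sum fun A hA => ?_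
  split_ifs with hE hE'
  · exact le_refl _
  · exact absurd (h A hA hE) hE'
  · exact wt_nonneg h0 h1 A
  · exact le_refl 0

lemma PP_compl : PP D p (fun A => ¬ E A) = 1 - PP D p E := by
  have key : PP D p E + PP D p (fun A => ¬ E A) = 1 := by
    rw [PP_eq, PP_eq, ← Finset.sum_add_distrib, ← sum_wt p D]
    refine Finset.sum_congr rfl fun A _ => ?_
    by_cases h : E A <;> simp [h]
  linarith

lemma PP_pos (h0 : 0 < p) (h1 : p < 1) (hE : E D) : 0 < PP D p E := by
  rw [PP_eq]
  have hmem : D ∈ D.powerset := Finset.mem_powerset_self D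
  have hterm : 0 < if E D then wt D p D else 0 := by
    rw [if_pos hE]
    exact wt_pos h0 h1 D
  refine lt_of_lt_of_le hterm ?_
  refine Finset.single_le_sum (f := fun A => if E A then wt D p A else 0) (fun A _ => ?_) hmem
  split_ifs
  · exact le_of_lt (wt_pos h0 h1 _)
  · exact le_refl 0

lemma sum_powerset_union (h : Disjoint S T) (f : Finset α → ℝ) :
    ∑ A ∈ (S ∪ T).powerset, f A = ∑ B ∈ S.powerset, ∑ C ∈ T.powerset, f (B ∪ C) := by
  have h1 : ∑ A ∈ (S ∪ T).powerset, f A = ∑ x ∈ S.powerset ×ˢ T.powerset, f (x.1 ∪ x.2) := by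
    refine Finset.sum_nbij' (i := fun A => (A ∩ S, A ∩ T)) (j := fun x => x.1 ∪ x.2)
      ?_ ?_ ?_ ?_ ?_
    · intro A hA
      rw [Finset.mem_powerset] at hA
      rw [Finset.mem_product]
      exact ⟨Finset.mem_powerset.2 Finset.inter_subset_right,
        Finset.mem_powerset.2 Finset.inter_subset_right⟩
    · intro x hx
      rw [Finset.mem_product] at hx
      rw [Finset.mem_powerset]
      exact Finset.union_subset_union (Finset.mem_powerset.1 hx.1) (Finset.mem_powerset.1 hx.2)
    · intro A hA
      rw [Finset.mem_powerset] at hA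
      simp only
      rw [← Finset.inter_union_distrib_left]
      exact Finset.inter_eq_left.2 hA
    · intro x hx
      rw [Finset.mem_product, Finset.mem_powerset, Finset.mem_powerset] at hx
      have e1 : (x.1 ∪ x.2) ∩ S = x.1 := by
        ext v
        simp only [Finset.mem_inter, Finset.mem_union]
        constructor
        · rintro ⟨h1 | h1, h2⟩
          · exact h1
          · exact absurd h2 (Finset.disjoint_right.1 h (hx.2 h1))
        · intro h1
          exact ⟨Or.inl h1, hx.1 h1⟩
      have e2 : (x.1 ∪ x.2) ∩ T = x.2 := by
        ext v
        simp only [Finset.mem_inter, Finset.mem_union]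
        constructor
        · rintro ⟨h1 | h1, h2⟩
          · exact absurd h2 (Finset.disjoint_left.1 h (hx.1 h1))
          · exact h1
        · intro h1
          exact ⟨Or.inr h1, hx.2 h1⟩
      simp only [e1, e2]
    · intro A hA
      rw [Finset.mem_powerset] at hA
      simp only
      rw [← Finset.inter_union_distrib_left, Finset.inter_eq_left.2 hA]
  rw [h1, Finset.sum_product]

end Prob
section Prob2

variable {α : Type*} [DecidableEq α]
variable {D S T B C U : Finset α} {p : ℝ} {E F E' : Finset α → Prop}

lemma wt_union (h : Disjoint S T) (hB : B ⊆ S) (hC : C ⊆ T) :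
    wt (S ∪ T) p (B ∪ C) = wt S p B * wt T p C := by
  have hd : Disjoint B C := Finset.disjoint_of_subset_left hB
    (Finset.disjoint_of_subset_right hC h)
  have h1 : B.card ≤ S.card := Finset.card_le_card hB
  have h2 : C.card ≤ T.card := Finset.card_le_card hC
  rw [wt, wt, wt, Finset.card_union_of_disjoint h, Finset.card_union_of_disjoint hd,
    show S.card + T.card - (B.card + C.card) = (S.card - B.card) + (T.card - C.card) by omega,
    pow_add, pow_add]
  ring

/-- `E` depends only on the coordinates in `S`. -/
def Dep (S : Finset α) (E : Finset α → Prop) : Prop := ∀ A, E A ↔ E (A ∩ S)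

lemma dep_inter (hE : Dep S E) (hSU : S ⊆ U) (A : Finset α) : E (A ∩ U) ↔ E A := by
  rw [hE (A ∩ U), hE A]
  have e : (A ∩ U) ∩ S = A ∩ S := by
    ext x
    simp only [Finset.mem_inter]
    exact ⟨fun h => ⟨h.1.1, h.2⟩, fun h => ⟨⟨h.1, hSU h.2⟩, h.2⟩⟩
  rw [e]

lemma Dep.of_subset (hE : Dep S E) (hSU : S ⊆ U) : Dep U E :=
  fun A => (dep_inter hE hSU A).symm

lemma dep_union_left (hE : Dep S E) (hB : B ⊆ S) (hC : Disjoint S C) :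
    (E (B ∪ C) ↔ E B) := by
  rw [hE (B ∪ C), hE B]
  have e : (B ∪ C) ∩ S = B ∩ S := by
    ext x
    simp only [Finset.mem_inter, Finset.mem_union]
    constructor
    · rintro ⟨h1 | h1, h2⟩
      · exact ⟨h1, h2⟩
      · exact absurd h1 (Finset.disjoint_left.1 hC h2)
    · exact fun h => ⟨Or.inl h.1, h.2⟩
  rw [e]

lemma dep_union_right (hF : Dep T F) (hC : C ⊆ T) (hB : Disjoint T B) :
    (F (B ∪ C) ↔ F C) := by
  rw [Finset.union_comm]
  exact dep_union_left hF hC hB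

lemma PP_depends (hS : S ⊆ D) (hE : Dep S E) : PP D p E = PP S p E := by
  have hD : D = S ∪ (D \ S) := by
    rw [Finset.union_sdiff_of_subset hS]
  have hdisj : Disjoint S (D \ S) := Finset.disjoint_sdiff
  conv_lhs => rw [hD]
  rw [PP_eq, sum_powerset_union hdisj]
  have hstep : ∀ B ∈ S.powerset, ∀ C ∈ (D \ S).powerset,
      (if E (B ∪ C) then wt (S ∪ (D \ S)) p (B ∪ C) else 0) =
        (if E B then wt S p B else 0) * wt (D \ S) p C := by
    intro B hB C hC
    rw [Finset.mem_powerset] at hB hC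
    rw [wt_union hdisj hB hC, if_congr (dep_union_left hE hB
      (Finset.disjoint_of_subset_right hC hdisj)) rfl rfl]
    split_ifs
    · rfl
    · rw [zero_mul]
  calc ∑ B ∈ S.powerset, ∑ C ∈ (D \ S).powerset,
        (if E (B ∪ C) then wt (S ∪ (D \ S)) p (B ∪ C) else 0)
      = ∑ B ∈ S.powerset, ∑ C ∈ (D \ S).powerset,
        (if E B then wt S p B else 0) * wt (D \ S) p C :=
        Finset.sum_congr rfl fun B hB => Finset.sum_congr rfl fun C hC => hstep B hB C hC
    _ = ∑ B ∈ S.powerset, (if E B then wt S p B else 0) * ∑ C ∈ (D \ S).powerset,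
          wt (D \ S) p C := by
        refine Finset.sum_congr rfl fun B _ => ?_
        rw [Finset.mul_sum]
    _ = PP S p E := by
        rw [PP_eq]
        refine Finset.sum_congr rfl fun B _ => ?_
        rw [sum_wt, mul_one]

lemma PP_fact (hS : S ⊆ D) (hT : T ⊆ D) (hST : Disjoint S T)
    (hE : Dep S E) (hF : Dep T F) :
    PP D p (fun A => E A ∧ F A) = PP D p E * PP D p F := by
  set G : Finset α → Prop := fun A => E A ∧ F A with hG
  have hGiff : ∀ X, G X ↔ (E X ∧ F X) := fun X => by rw [hG]
  have hdep : Dep (S ∪ T) G := by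
    intro A
    have h1 := dep_inter (U := S ∪ T) hE Finset.subset_union_left A
    have h2 := dep_inter (U := S ∪ T) hF Finset.subset_union_right A
    rw [hGiff, hGiff]
    constructor
    · exact fun h => ⟨h1.2 h.1, h2.2 h.2⟩
    · exact fun h => ⟨h1.1 h.1, h2.1 h.2⟩
  rw [PP_depends (Finset.union_subset hS hT) hdep, PP_depends hS hE, PP_depends hT hF]
  rw [PP_eq, sum_powerset_union hST]
  have hstep : ∀ B ∈ S.powerset, ∀ C ∈ T.powerset,
      (@ite ℝ (G (B ∪ C)) (Classical.propDecidable _) (wt (S ∪ T) p (B ∪ C)) 0) =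
        (if E B then wt S p B else 0) * (if F C then wt T p C else 0) := by
    intro B hB C hC
    rw [Finset.mem_powerset] at hB hC
    have hEiff := dep_union_left hE hB (Finset.disjoint_of_subset_right hC hST)
    have hFiff := dep_union_right hF hC (Finset.disjoint_of_subset_left hB hST).symm
    by_cases h1 : E B <;> by_cases h2 : F C
    · rw [if_pos ((hGiff _).2 ⟨hEiff.2 h1, hFiff.2 h2⟩), if_pos h1, if_pos h2,
        wt_union hST hB hC]
    · rw [if_neg (fun h => h2 (hFiff.1 ((hGiff _).1 h).2)), if_neg h2, mul_zero]
    · rw [if_neg (fun h => h1 (hEiff.1 ((hGiff _).1 h).1)), if_neg h1, zero_mul]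
    · rw [if_neg (fun h => h1 (hEiff.1 ((hGiff _).1 h).1)), if_neg h1, zero_mul]
  refine Eq.trans (Finset.sum_congr rfl fun B hB =>
    Finset.sum_congr rfl fun C hC => hstep B hB C hC) ?_
  rw [PP_eq, PP_eq, Finset.sum_mul_sum]

lemma PP_exists_base (p : ℝ) (S : Finset α) :
    PP S p (fun A => ∃ v ∈ S, v ∈ A) = 1 - (1-p) ^ S.card := by
  have hco := PP_compl (D := S) (p := p) (E := fun A => ∃ v ∈ S, v ∈ A)
  have hval : PP S p (fun A => ¬ ∃ v ∈ S, v ∈ A) = (1-p) ^ S.card := by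
    rw [PP_eq]
    rw [Finset.sum_eq_single ∅]
    · simp [wt]
    · intro A hA hne
      rw [Finset.mem_powerset] at hA
      obtain ⟨v, hv⟩ := Finset.nonempty_iff_ne_empty.2 hne
      exact if_neg (fun hcon => hcon ⟨v, hA hv, hv⟩)
    · intro h
      exact absurd (Finset.empty_mem_powerset S) h
  linarith

lemma PP_subset_base (p : ℝ) (T : Finset α) :
    PP T p (fun A => T ⊆ A) = p ^ T.card := by
  rw [PP_eq]
  rw [Finset.sum_eq_single T]
  · rw [if_pos (subset_refl T), wt, Nat.sub_self, pow_zero, mul_one]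
  · intro A hA hne
    rw [Finset.mem_powerset] at hA
    rw [if_neg]
    intro h
    exact hne (Finset.Subset.antisymm hA h)
  · intro h
    exact absurd (Finset.mem_powerset_self T) h

lemma PP_prod {ι : Type*} [DecidableEq ι] (K : Finset ι) (Tk : ι → Finset α)
    (Ek : ι → Finset α → Prop) :
    (∀ k ∈ K, Tk k ⊆ D) → (∀ k ∈ K, Dep (Tk k) (Ek k)) →
    (∀ k ∈ K, ∀ k' ∈ K, k ≠ k' → Disjoint (Tk k) (Tk k')) →
    PP D p (fun A => ∀ k ∈ K, Ek k A) = ∏ k ∈ K, PP D p (Ek k) := by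
  induction K using Finset.induction_on with
  | empty =>
      intro _ _ _
      rw [Finset.prod_empty]
      rw [PP_congr (E' := fun _ => True) (fun A _ => by simp)]
      exact PP_true
  | @insert k₀ K hk₀ ih =>
      intro hsub hdep hdisj
      have hE0 : Dep (Tk k₀) (Ek k₀) := hdep k₀ (Finset.mem_insert_self _ _)
      have hrest : Dep (K.biUnion Tk) (fun A => ∀ k ∈ K, Ek k A) := by
        intro A
        have hk' : ∀ k ∈ K, (Ek k A ↔ Ek k (A ∩ K.biUnion Tk)) := by
          intro k hk
          exact (dep_inter (hdep k (Finset.mem_insert_of_mem hk))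
            (Finset.subset_biUnion_of_mem Tk hk) A).symm
        exact ⟨fun h k hk => (hk' k hk).1 (h k hk), fun h k hk => (hk' k hk).2 (h k hk)⟩
      have hdisj0 : Disjoint (Tk k₀) (K.biUnion Tk) := by
        rw [Finset.disjoint_biUnion_right]
        intro k hk
        exact hdisj k₀ (Finset.mem_insert_self _ _) k (Finset.mem_insert_of_mem hk)
          (fun h => hk₀ (h ▸ hk))
      have hTsub : K.biUnion Tk ⊆ D := by
        refine Finset.biUnion_subset.2 fun k hk => hsub k (Finset.mem_insert_of_mem hk)
      rw [PP_congr (E' := fun A => Ek k₀ A ∧ ∀ k ∈ K, Ek k A)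
        (fun A _ => by rw [Finset.forall_mem_insert])]
      rw [PP_fact (hsub k₀ (Finset.mem_insert_self _ _)) hTsub hdisj0 hE0 hrest]
      rw [Finset.prod_insert hk₀]
      rw [ih (fun k hk => hsub k (Finset.mem_insert_of_mem hk))
        (fun k hk => hdep k (Finset.mem_insert_of_mem hk))
        (fun k hk k' hk' hne => hdisj k (Finset.mem_insert_of_mem hk) k'
          (Finset.mem_insert_of_mem hk') hne)]

end Prob2
section Events

variable {α : Type*} [DecidableEq α] {S T : Finset α} {E : Finset α → Prop}

lemma closure3_base {a b c r : ℕ} {dom A A' : Set V3} (h : A ∩ dom = A' ∩ dom) :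
    closure3 a b c r dom A = closure3 a b c r dom A' := by
  rw [closure3, closure3, h]

lemma dep_IFill (a b c r x y z : ℕ) : Dep (rectF x y z) (IFill a b c r (rect x y z)) := by
  intro A
  have h : (↑A : Set V3) ∩ rect x y z = ↑(A ∩ rectF x y z) ∩ rect x y z := by
    ext v
    simp only [Set.mem_inter_iff, Finset.coe_inter, rect]
    constructor
    · rintro ⟨h1, h2⟩; exact ⟨⟨h1, h2⟩, h2⟩
    · rintro ⟨⟨h1, _⟩, h2⟩; exact ⟨h1, h2⟩
  rw [IFill, IFill, closure3_base h]

lemma dep_exists (S : Finset α) : Dep S (fun A => ∃ v ∈ S, v ∈ A) := by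
  intro A
  constructor
  · rintro ⟨v, h1, h2⟩; exact ⟨v, h1, Finset.mem_inter.2 ⟨h2, h1⟩⟩
  · rintro ⟨v, h1, h2⟩; exact ⟨v, h1, (Finset.mem_inter.1 h2).1⟩

lemma dep_superset (T : Finset α) : Dep T (fun A => T ⊆ A) := by
  intro A
  constructor
  · exact fun h x hx => Finset.mem_inter.2 ⟨h hx, hx⟩
  · exact fun h x hx => (Finset.mem_inter.1 (h hx)).1

lemma dep_not (h : Dep S E) : Dep S (fun A => ¬ E A) := fun A => not_congr (h A)

/-- The slab `[l] × {w+1} × [w]`. -/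
noncomputable def slab2F (l w : ℕ) : Finset V3 :=
  Finset.Icc (1:ℤ) l ×ˢ (Finset.Icc ((w:ℤ)+1) ((w:ℤ)+1) ×ˢ Finset.Icc (1:ℤ) w)

/-- The slab `[l] × [w] × {w+1}`. -/
noncomputable def slab3F (l w : ℕ) : Finset V3 :=
  Finset.Icc (1:ℤ) l ×ˢ (Finset.Icc (1:ℤ) w ×ˢ Finset.Icc ((w:ℤ)+1) ((w:ℤ)+1))

lemma mem_slab2F {l w : ℕ} {v1 v2 v3 : ℤ} :
    ((v1, v2, v3) : V3) ∈ slab2F l w ↔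
      1 ≤ v1 ∧ v1 ≤ l ∧ v2 = (w:ℤ)+1 ∧ 1 ≤ v3 ∧ v3 ≤ w := by
  simp only [slab2F, Finset.mem_product, Finset.mem_Icc]
  omega

lemma mem_slab3F {l w : ℕ} {v1 v2 v3 : ℤ} :
    ((v1, v2, v3) : V3) ∈ slab3F l w ↔
      1 ≤ v1 ∧ v1 ≤ l ∧ 1 ≤ v2 ∧ v2 ≤ w ∧ v3 = (w:ℤ)+1 := by
  simp only [slab3F, Finset.mem_product, Finset.mem_Icc]
  omega

lemma card_slab2F (l w : ℕ) : (slab2F l w).card = l * w := by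
  rw [slab2F, Finset.card_product, Finset.card_product, Int.card_Icc, Int.card_Icc,
    Int.card_Icc, show ((l:ℤ)+1-1).toNat = l by omega,
    show (((w:ℤ)+1)+1-((w:ℤ)+1)).toNat = 1 by omega,
    show ((w:ℤ)+1-1).toNat = w by omega, one_mul]

lemma card_slab3F (l w : ℕ) : (slab3F l w).card = l * w := by
  rw [slab3F, Finset.card_product, Finset.card_product, Int.card_Icc, Int.card_Icc,
    Int.card_Icc, show ((l:ℤ)+1-1).toNat = l by omega,
    show (((w:ℤ)+1)+1-((w:ℤ)+1)).toNat = 1 by omega,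
    show ((w:ℤ)+1-1).toNat = w by omega, mul_one]

lemma mem_rectF {x y z : ℕ} {v1 v2 v3 : ℤ} :
    ((v1, v2, v3) : V3) ∈ rectF x y z ↔
      1 ≤ v1 ∧ v1 ≤ (x:ℤ) ∧ 1 ≤ v2 ∧ v2 ≤ (y:ℤ) ∧ 1 ≤ v3 ∧ v3 ≤ (z:ℤ) := by
  simp only [rectF, Finset.mem_product, Finset.mem_Icc]
  omega

/-- Triangular seed with corner `(l+1, y₀, z₀)`. -/
noncomputable def triF (a c l : ℕ) (y₀ z₀ : ℤ) : Finset V3 :=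
  (Finset.range (c+1-a)).biUnion
    (fun i => (Finset.range (c+1-a-i)).image (fun j : ℕ => ((l:ℤ)+1, y₀+(i:ℤ), z₀+(j:ℤ))))

lemma mem_triF {a c l : ℕ} {y₀ z₀ : ℤ} {v : V3} (hac : a ≤ c) :
    v ∈ triF a c l y₀ z₀ ↔
      ∃ i j : ℕ, i + j + a ≤ c ∧ v = ((l:ℤ)+1, y₀+i, z₀+j) := by
  constructor
  · intro hv
    rw [triF, Finset.mem_biUnion] at hv
    obtain ⟨i, hi, hv⟩ := hv
    rw [Finset.mem_image] at hv
    obtain ⟨j, hj, hv⟩ := hv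
    rw [Finset.mem_range] at hi
    rw [Finset.mem_range] at hj
    exact ⟨i, j, by omega, hv.symm⟩
  · rintro ⟨i, j, h, rfl⟩
    rw [triF, Finset.mem_biUnion]
    refine ⟨i, Finset.mem_range.2 (by omega), ?_⟩
    rw [Finset.mem_image]
    exact ⟨j, Finset.mem_range.2 (by omega), rfl⟩

lemma sum_range_sub_mul_two (n : ℕ) :
    (∑ i ∈ Finset.range n, (n - i)) * 2 = n * (n + 1) := by
  have h1 : ∑ i ∈ Finset.range n, (n - i) = (∑ i ∈ Finset.range n, i) + n := by
    have h2 := Finset.sum_range_reflect (fun j => n - j) n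
    have h3 : ∀ j ∈ Finset.range n, n - (n - 1 - j) = j + 1 := by
      intro j hj
      rw [Finset.mem_range] at hj
      omega
    rw [← h2, Finset.sum_congr rfl h3, Finset.sum_add_distrib, Finset.sum_const,
      Finset.card_range, smul_eq_mul, mul_one]
  rw [h1, add_mul, Finset.sum_range_id_mul_two]
  cases n with
  | zero => rfl
  | succ m => simp [Nat.succ_sub_one]; ring

lemma card_triF_le {a c l : ℕ} (ha : 1 ≤ a) (hac : a < c) (y₀ z₀ : ℤ) :
    (triF a c l y₀ z₀).card ≤ c * (c + 1) / 2 := by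
  have hcard : (triF a c l y₀ z₀).card ≤ ∑ i ∈ Finset.range (c+1-a), (c+1-a - i) := by
    rw [triF]
    refine le_trans Finset.card_biUnion_le (Finset.sum_le_sum fun i _ => ?_)
    exact le_trans Finset.card_image_le (le_of_eq (Finset.card_range _))
  have h2 := sum_range_sub_mul_two (c+1-a)
  have h3 : (c+1-a) * ((c+1-a)+1) ≤ c * (c+1) := Nat.mul_le_mul (by omega) (by omega)
  have h4 : 2 * (c * (c+1) / 2) = c * (c+1) := by
    have : 2 ∣ c * (c+1) := (Nat.even_mul_succ_self c).two_dvd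
    omega
  omega

lemma cancel_cs {c : ℕ} (hc : 0 < c) {s s' : ℕ} {i i' : ℤ} (hi : 0 ≤ i) (hi' : 0 ≤ i')
    (hlt : i < c) (hlt' : i' < c) (h : (c:ℤ)*s + i = (c:ℤ)*s' + i') : s = s' ∧ i = i' := by
  have key : ∀ u u' : ℕ, ∀ x x' : ℤ, 0 ≤ x → x < c → 0 ≤ x' → u < u' →
      (c:ℤ)*u + x ≠ (c:ℤ)*u' + x' := by
    intro u u' x x' hx hxc hx' huu heq
    have h1 : ((u:ℤ)+1) ≤ u' := by exact_mod_cast huu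
    have h2 := mul_le_mul_of_nonneg_left h1 (show (0:ℤ) ≤ c by positivity)
    rw [mul_add, mul_one] at h2
    linarith
  rcases lt_trichotomy s s' with hs | hs | hs
  · exact absurd h (key s s' i i' hi hlt hi' hs)
  · subst hs
    refine ⟨rfl, by linarith⟩
  · exact absurd h.symm (key s' s i' i hi' hlt' hi hs)

end Events
section Assembly

lemma rectF_subset {x y z x' y' z' : ℕ} (hx : x ≤ x') (hy : y ≤ y') (hz : z ≤ z') :
    rectF x y z ⊆ rectF x' y' z' := by
  rintro ⟨v1, v2, v3⟩ hv
  rw [mem_rectF] at hv ⊢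
  omega

lemma rect_subset {x y z x' y' z' : ℕ} (hx : x ≤ x') (hy : y ≤ y') (hz : z ≤ z') :
    rect x y z ⊆ rect x' y' z' := by
  intro v hv
  exact Finset.mem_coe.2 (rectF_subset hx hy hz (Finset.mem_coe.1 hv))

lemma IFill_full (a b c r : ℕ) {x y z X Y Z : ℕ} (hx : x ≤ X) (hy : y ≤ Y) (hz : z ≤ Z) :
    IFill a b c r (rect x y z) (rectF X Y Z) := by
  intro v hv
  exact subset_closure3 ⟨rect_subset hx hy hz hv, hv⟩

lemma IFill_mono_dom {a b c r : ℕ} {x y z X Y Z : ℕ} (hx : x ≤ X) (hy : y ≤ Y) (hz : z ≤ Z)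
    {A : Finset V3} (h : IFill a b c r (rect x y z) A) :
    rect x y z ⊆ closure3 a b c r (rect X Y Z) ↑A := by
  intro v hv
  refine closure3_mono (rect_subset hx hy hz) ?_ (h hv)
  exact fun u hu => ⟨hu.1, rect_subset hx hy hz hu.2⟩

set_option maxHeartbeats 1000000 in
lemma part_i (a c l w : ℕ) (ha : 1 ≤ a) (hac : a < c) (hl : c ≤ l) (hw : c ≤ w)
    {p : ℝ} (hp0 : 0 < p) (hp1 : p < 1) :
    (1 - Real.exp (-(p * (l : ℝ) * (w : ℝ)))) ^ 2 ≤
      PPc (rectF (l + 1) (w + 1) (w + 1)) p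
        (IFill a c c (c + 1) (rect l (w + 1) (w + 1)))
        (IFill a c c (c + 1) (rect l w w)) := by
  have hp0' : (0:ℝ) ≤ p := le_of_lt hp0
  have hp1' : p ≤ 1 := le_of_lt hp1
  set D := rectF (l+1) (w+1) (w+1) with hD
  set F : Finset V3 → Prop := IFill a c c (c+1) (rect l w w) with hF
  set E : Finset V3 → Prop := IFill a c c (c+1) (rect l (w+1) (w+1)) with hE
  set G2 : Finset V3 → Prop := fun A => ∃ v ∈ slab2F l w, v ∈ A with hG2
  set G3 : Finset V3 → Prop := fun A => ∃ v ∈ slab3F l w, v ∈ A with hG3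
  have hFD : F D := IFill_full a c c (c+1) (by omega) (by omega) (by omega)
  have hFpos : 0 < PP D p F := PP_pos hp0 hp1 hFD
  have hsubF : rectF l w w ⊆ D := rectF_subset (by omega) (by omega) (by omega)
  have hsub2 : slab2F l w ⊆ D := by
    rintro ⟨v1, v2, v3⟩ hv
    rw [mem_slab2F] at hv
    rw [hD, mem_rectF]
    push_cast
    omega
  have hsub3 : slab3F l w ⊆ D := by
    rintro ⟨v1, v2, v3⟩ hv
    rw [mem_slab3F] at hv
    rw [hD, mem_rectF]
    push_cast
    omega
  have dFS2 : Disjoint (rectF l w w) (slab2F l w) := by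
    rw [Finset.disjoint_left]
    rintro ⟨v1, v2, v3⟩ h1 h2
    rw [mem_rectF] at h1
    rw [mem_slab2F] at h2
    omega
  have dFS3 : Disjoint (rectF l w w) (slab3F l w) := by
    rw [Finset.disjoint_left]
    rintro ⟨v1, v2, v3⟩ h1 h2
    rw [mem_rectF] at h1
    rw [mem_slab3F] at h2
    omega
  have d23 : Disjoint (slab2F l w) (slab3F l w) := by
    rw [Finset.disjoint_left]
    rintro ⟨v1, v2, v3⟩ h1 h2
    rw [mem_slab2F] at h1
    rw [mem_slab3F] at h2
    omega
  have depF : Dep (rectF l w w) F := dep_IFill a c c (c+1) l w w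
  have depG2 : Dep (slab2F l w) G2 := dep_exists _
  have depG3 : Dep (slab3F l w) G3 := dep_exists _
  have depG23 : Dep (slab2F l w ∪ slab3F l w) (fun A => G2 A ∧ G3 A) := by
    intro A
    have h1 := dep_inter (U := slab2F l w ∪ slab3F l w) depG2 Finset.subset_union_left A
    have h2 := dep_inter (U := slab2F l w ∪ slab3F l w) depG3 Finset.subset_union_right A
    exact ⟨fun h => ⟨h1.2 h.1, h2.2 h.2⟩, fun h => ⟨h1.1 h.1, h2.1 h.2⟩⟩
  have himp : ∀ A ∈ D.powerset, (F A ∧ (G2 A ∧ G3 A)) → (E A ∧ F A) := by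
    rintro A _ ⟨hFA, hG2A, hG3A⟩
    refine ⟨?_, hFA⟩
    obtain ⟨⟨u1, u2, u3⟩, huS, huA⟩ := hG2A
    obtain ⟨⟨t1, t2, t3⟩, htS, htA⟩ := hG3A
    rw [mem_slab2F] at huS
    rw [mem_slab3F] at htS
    obtain ⟨hu1, hu1', hu2, hu3, hu3'⟩ := huS
    obtain ⟨ht1, ht1', ht2, ht2', ht3⟩ := htS
    subst hu2
    subst ht3
    refine fill_i a c l w ha hac hl hw ↑A u1 u3 t1 t2 hu1 hu1' hu3 hu3' ht1 ht1' ht2 ht2'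
      (IFill_mono_dom (by omega) (by omega) (by omega) hFA) ?_ ?_
    · refine subset_closure3 ⟨Finset.mem_coe.2 huA, ?_⟩
      rw [mem_rect]
      push_cast
      omega
    · refine subset_closure3 ⟨Finset.mem_coe.2 htA, ?_⟩
      rw [mem_rect]
      push_cast
      omega
  have key : PP D p (fun A => F A ∧ (G2 A ∧ G3 A)) = PP D p F * (PP D p G2 * PP D p G3) := by
    rw [PP_fact hsubF (Finset.union_subset hsub2 hsub3)
      (Finset.disjoint_union_right.2 ⟨dFS2, dFS3⟩) depF depG23,
      PP_fact hsub2 hsub3 d23 depG2 depG3]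
  have hG2val : PP D p G2 = 1 - (1-p)^(l*w) := by
    rw [hG2, PP_depends hsub2 depG2, PP_exists_base, card_slab2F]
  have hG3val : PP D p G3 = 1 - (1-p)^(l*w) := by
    rw [hG3, PP_depends hsub3 depG3, PP_exists_base, card_slab3F]
  have hqle : (1 - Real.exp (-(p * (l:ℝ) * (w:ℝ)))) ≤ 1 - (1-p)^(l*w) := by
    have h1 : ((1:ℝ)-p)^(l*w) ≤ Real.exp (-(p * (l:ℝ) * (w:ℝ))) := by
      calc ((1:ℝ)-p)^(l*w) ≤ Real.exp (-p) ^ (l*w) := by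
            refine pow_le_pow_left₀ (by linarith) ?_ _
            have := Real.add_one_le_exp (-p)
            linarith
        _ = Real.exp (-(p * (l:ℝ) * (w:ℝ))) := by
            rw [← Real.exp_nat_mul]
            congr 1
            push_cast
            ring
    linarith
  have hq0 : 0 ≤ 1 - Real.exp (-(p * (l:ℝ) * (w:ℝ))) := by
    have h2 : Real.exp (-(p * (l:ℝ) * (w:ℝ))) ≤ 1 := by
      rw [Real.exp_le_one_iff]
      have : (0:ℝ) ≤ p * (l:ℝ) * (w:ℝ) := by positivity
      linarith
    linarith
  show (1 - Real.exp (-(p * (l:ℝ) * (w:ℝ)))) ^ 2 ≤ PP D p (fun A => E A ∧ F A) / PP D p F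
  rw [le_div_iff₀ hFpos]
  have hstep1 : (1 - Real.exp (-(p * (l:ℝ) * (w:ℝ)))) ^ 2 * PP D p F ≤
      PP D p (fun A => F A ∧ (G2 A ∧ G3 A)) := by
    rw [key, hG2val, hG3val]
    have hmul : (1 - Real.exp (-(p * (l:ℝ) * (w:ℝ)))) ^ 2 ≤
        (1 - (1-p)^(l*w)) * (1 - (1-p)^(l*w)) := by
      rw [pow_two]
      exact mul_le_mul hqle hqle hq0 (by linarith)
    calc (1 - Real.exp (-(p * (l:ℝ) * (w:ℝ)))) ^ 2 * PP D p F
        ≤ ((1 - (1-p)^(l*w)) * (1 - (1-p)^(l*w))) * PP D p F :=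
          mul_le_mul_of_nonneg_right hmul (le_of_lt hFpos)
      _ = PP D p F * ((1 - (1-p)^(l*w)) * (1 - (1-p)^(l*w))) := by ring
  exact le_trans hstep1 (PP_mono hp0' hp1' himp)

end Assembly
section Assembly2

lemma tri_sub_rect {a c l w : ℕ} (ha : 1 ≤ a) (hac : a < c) (hl : c ≤ l) {s t : ℕ}
    (hcs : c*s + c ≤ w) (hct : c*t + c ≤ w) :
    ∀ v ∈ triF a c l (1+(c:ℤ)*s) (1+(c:ℤ)*t), v ∈ rect (l+1) w w := by
  intro v hv
  rw [mem_triF (le_of_lt hac)] at hv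
  obtain ⟨i, j, hij, rfl⟩ := hv
  have hcsz : (c:ℤ)*s + c ≤ w := by exact_mod_cast hcs
  have hctz : (c:ℤ)*t + c ≤ w := by exact_mod_cast hct
  have hiz : (i:ℤ) + j + a ≤ c := by exact_mod_cast hij
  have hi0 : (0:ℤ) ≤ i := Int.ofNat_nonneg i
  have hj0 : (0:ℤ) ≤ j := Int.ofNat_nonneg j
  have ha1 : (1:ℤ) ≤ a := by exact_mod_cast ha
  have hs0 : (0:ℤ) ≤ (c:ℤ)*s := mul_nonneg (Int.ofNat_nonneg c) (Int.ofNat_nonneg s)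
  have ht0 : (0:ℤ) ≤ (c:ℤ)*t := mul_nonneg (Int.ofNat_nonneg c) (Int.ofNat_nonneg t)
  rw [mem_rect]
  push_cast
  refine ⟨by linarith, by linarith, by linarith, by linarith, by linarith, by linarith⟩

lemma tri_sub_rectF {a c l w : ℕ} (ha : 1 ≤ a) (hac : a < c) (hl : c ≤ l) {s t : ℕ}
    (hcs : c*s + c ≤ w) (hct : c*t + c ≤ w) :
    triF a c l (1+(c:ℤ)*s) (1+(c:ℤ)*t) ⊆ rectF (l+1) (w+1) (w+1) := by
  intro v hv
  have h := tri_sub_rect ha hac hl hcs hct v hv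
  obtain ⟨v1, v2, v3⟩ := v
  rw [mem_rect] at h
  rw [mem_rectF]
  push_cast at h ⊢
  omega

lemma tri_seed {a c l w : ℕ} {A : Finset V3} {y₀ z₀ : ℤ} (hac : a ≤ c)
    (hsub : triF a c l y₀ z₀ ⊆ A)
    (hsubD : ∀ v ∈ triF a c l y₀ z₀, v ∈ rect (l+1) w w) :
    ∀ y z : ℤ, y₀ ≤ y → z₀ ≤ z → (y - y₀) + (z - z₀) + a ≤ c →
      (((l:ℤ)+1, y, z) : V3) ∈ closure3 a c c (c+1) (rect (l+1) w w) ↑A := by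
  intro y z hy hz hs
  obtain ⟨i, j, hyi, hzj, hij⟩ : ∃ i j : ℕ, (y = y₀ + i) ∧ (z = z₀ + j) ∧ i + j + a ≤ c :=
    ⟨(y-y₀).toNat, (z-z₀).toNat, by omega, by omega, by omega⟩
  have hmem : (((l:ℤ)+1, y, z) : V3) ∈ triF a c l y₀ z₀ :=
    (mem_triF hac).2 ⟨i, j, hij, by rw [hyi, hzj]⟩
  exact subset_closure3 ⟨Finset.mem_coe.2 (hsub hmem), hsubD _ hmem⟩

set_option maxHeartbeats 1000000 in
lemma part_ii (a c l w : ℕ) (ha : 1 ≤ a) (hac : a < c) (hl : c ≤ l) (hw : c ≤ w)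
    {p : ℝ} (hp0 : 0 < p) (hp1 : p < 1) :
    1 - Real.exp (-((1/(4*(c:ℝ)^2)) * p ^ (c * (c + 1) / 2) * (w : ℝ) ^ 2)) ≤
      PPc (rectF (l + 1) (w + 1) (w + 1)) p
        (IFill a c c (c + 1) (rect (l + 1) w w))
        (IFill a c c (c + 1) (rect l w w)) := by
  have hp0' : (0:ℝ) ≤ p := le_of_lt hp0
  have hp1' : p ≤ 1 := le_of_lt hp1
  have hc0 : 0 < c := by omega
  set m := w / c with hm
  have hm1 : 1 ≤ m := (Nat.one_le_div_iff hc0).2 hw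
  have hcm : c * m ≤ w := by
    rw [mul_comm]
    exact Nat.div_mul_le_self w c
  have hw2cm : w ≤ 2 * (c * m) := by
    have h1 := Nat.div_add_mod w c
    rw [← hm] at h1
    have h2 : w % c < c := Nat.mod_lt w hc0
    have h3 : c ≤ c * m := Nat.le_mul_of_pos_right c hm1
    omega
  have hcsw : ∀ s : ℕ, s < m → c * s + c ≤ w := by
    intro s hs
    have h1 : c * (s+1) ≤ c * m := Nat.mul_le_mul_left c (by omega)
    rw [Nat.mul_succ] at h1
    exact le_trans h1 hcm
  set D := rectF (l+1) (w+1) (w+1) with hD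
  set F : Finset V3 → Prop := IFill a c c (c+1) (rect l w w) with hF
  set E : Finset V3 → Prop := IFill a c c (c+1) (rect (l+1) w w) with hE
  set K : Finset (ℕ × ℕ) := Finset.range m ×ˢ Finset.range m with hK
  set Tk : ℕ × ℕ → Finset V3 :=
    fun st => triF a c l (1+(c:ℤ)*st.1) (1+(c:ℤ)*st.2) with hTk
  have hKmem : ∀ st : ℕ × ℕ, st ∈ K → st.1 < m ∧ st.2 < m := by
    intro st hst
    rw [hK, Finset.mem_product, Finset.mem_range, Finset.mem_range] at hst
    exact hst
  have hFD : F D := IFill_full a c c (c+1) (by omega) (by omega) (by omega)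
  have hFpos : 0 < PP D p F := PP_pos hp0 hp1 hFD
  have hsubF : rectF l w w ⊆ D := rectF_subset (by omega) (by omega) (by omega)
  have depF : Dep (rectF l w w) F := dep_IFill a c c (c+1) l w w
  have hsubT : ∀ st ∈ K, Tk st ⊆ D := by
    intro st hst
    obtain ⟨hs, ht⟩ := hKmem st hst
    exact tri_sub_rectF ha hac hl (hcsw _ hs) (hcsw _ ht)
  have hdepT : ∀ st ∈ K, Dep (Tk st) (fun A => ¬ Tk st ⊆ A) :=
    fun st _ => dep_not (dep_superset _)
  have hdisjT : ∀ st ∈ K, ∀ st' ∈ K, st ≠ st' → Disjoint (Tk st) (Tk st') := by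
    intro st hst st' hst' hne
    rw [Finset.disjoint_left]
    intro v hv hv'
    rw [hTk] at hv hv'
    rw [mem_triF (le_of_lt hac)] at hv hv'
    obtain ⟨i, j, hij, rfl⟩ := hv
    obtain ⟨i', j', hij', heq⟩ := hv'
    simp only [Prod.mk.injEq] at heq
    obtain ⟨-, h2, h3⟩ := heq
    have e2 : (c:ℤ)*st.1 + i = (c:ℤ)*st'.1 + i' := by linarith
    have e3 : (c:ℤ)*st.2 + j = (c:ℤ)*st'.2 + j' := by linarith
    have c2 := cancel_cs hc0 (Int.ofNat_nonneg i) (Int.ofNat_nonneg i')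
      (by exact_mod_cast (by omega : i < c)) (by exact_mod_cast (by omega : i' < c)) e2
    have c3 := cancel_cs hc0 (Int.ofNat_nonneg j) (Int.ofNat_nonneg j')
      (by exact_mod_cast (by omega : j < c)) (by exact_mod_cast (by omega : j' < c)) e3
    exact hne (Prod.ext c2.1 c3.1)
  have hdisjFT : ∀ st ∈ K, Disjoint (rectF l w w) (Tk st) := by
    intro st hst
    rw [Finset.disjoint_left]
    rintro ⟨v1, v2, v3⟩ h1 h2
    rw [mem_rectF] at h1
    rw [hTk, mem_triF (le_of_lt hac)] at h2
    obtain ⟨i, j, hij, heq⟩ := h2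
    simp only [Prod.mk.injEq] at heq
    omega
  set Kc := c * (c + 1) / 2 with hKc
  -- probability of the negation event
  have hprod : PP D p (fun A => ∀ st ∈ K, ¬ Tk st ⊆ A) =
      ∏ st ∈ K, (1 - p ^ (Tk st).card) := by
    rw [PP_prod K Tk _ hsubT hdepT hdisjT]
    refine Finset.prod_congr rfl fun st hst => ?_
    rw [PP_compl, PP_depends (hsubT st hst) (dep_superset _), PP_subset_base]
  have hcard : ∀ st ∈ K, (Tk st).card ≤ Kc := fun st _ => card_triF_le ha hac _ _
  have hfac : ∀ st ∈ K, 1 - p ^ (Tk st).card ≤ 1 - p ^ Kc := by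
    intro st hst
    have := pow_le_pow_of_le_one hp0' hp1' (hcard st hst)
    linarith
  have hfac0 : ∀ st ∈ K, (0:ℝ) ≤ 1 - p ^ (Tk st).card := by
    intro st hst
    have : p ^ (Tk st).card ≤ 1 := pow_le_one₀ hp0' hp1'
    linarith
  have hKcard : K.card = m * m := by
    rw [hK, Finset.card_product, Finset.card_range]
  have hprodle : ∏ st ∈ K, (1 - p ^ (Tk st).card) ≤ (1 - p ^ Kc) ^ (m * m) := by
    calc ∏ st ∈ K, (1 - p ^ (Tk st).card) ≤ ∏ st ∈ K, (1 - p ^ Kc) :=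
          Finset.prod_le_prod hfac0 hfac
      _ = (1 - p ^ Kc) ^ (m * m) := by rw [Finset.prod_const, hKcard]
  have hpKc1 : p ^ Kc ≤ 1 := pow_le_one₀ hp0' hp1'
  have hpKc0 : (0:ℝ) < p ^ Kc := pow_pos hp0 _
  have hexp : ((1:ℝ) - p ^ Kc) ^ (m * m) ≤
      Real.exp (-((1/(4*(c:ℝ)^2)) * p ^ Kc * (w:ℝ)^2)) := by
    have h1 : ((1:ℝ) - p ^ Kc) ^ (m * m) ≤ Real.exp (-(p ^ Kc)) ^ (m * m) := by
      refine pow_le_pow_left₀ (by linarith) ?_ _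
      have := Real.add_one_le_exp (-(p ^ Kc))
      linarith
    have h2 : Real.exp (-(p ^ Kc)) ^ (m * m) = Real.exp (-(((m*m : ℕ):ℝ) * p ^ Kc)) := by
      rw [← Real.exp_nat_mul]
      congr 1
      ring
    have h3 : (1/(4*(c:ℝ)^2)) * p ^ Kc * (w:ℝ)^2 ≤ ((m*m : ℕ):ℝ) * p ^ Kc := by
      have hw' : (w:ℝ) ≤ 2*(c:ℝ)*(m:ℝ) := by
        have := hw2cm
        push_cast
        exact_mod_cast (by push_cast; linarith [ (show ((w:ℝ)) ≤ 2*((c:ℝ)*(m:ℝ)) by exact_mod_cast hw2cm) ] : (w:ℝ) ≤ 2*(c:ℝ)*(m:ℝ))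
      have hw2 : (w:ℝ)^2 ≤ 4*(c:ℝ)^2*(m:ℝ)^2 := by nlinarith [Nat.cast_nonneg (α := ℝ) w]
      have hc2 : (0:ℝ) < 4*(c:ℝ)^2 := by positivity
      have hmm : ((m*m : ℕ):ℝ) = (m:ℝ)^2 := by push_cast; ring
      rw [hmm]
      rw [div_mul_eq_mul_div, div_mul_eq_mul_div, div_le_iff₀ hc2]
      nlinarith
    calc ((1:ℝ) - p ^ Kc) ^ (m * m) ≤ Real.exp (-(((m*m : ℕ):ℝ) * p ^ Kc)) := by
          rw [← h2]; exact h1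
      _ ≤ Real.exp (-((1/(4*(c:ℝ)^2)) * p ^ Kc * (w:ℝ)^2)) := by
          rw [Real.exp_le_exp]
          linarith
  -- implication
  have himp : ∀ A ∈ D.powerset, (F A ∧ ¬ (∀ st ∈ K, ¬ Tk st ⊆ A)) → (E A ∧ F A) := by
    rintro A _ ⟨hFA, hN⟩
    refine ⟨?_, hFA⟩
    push_neg at hN
    obtain ⟨st, hstK, hsubA⟩ := hN
    obtain ⟨hs, ht⟩ := hKmem st hstK
    have hcs := hcsw _ hs
    have hct := hcsw _ ht
    have hcsz : ((c:ℤ)*st.1 + c ≤ w) := by exact_mod_cast hcs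
    have hctz : ((c:ℤ)*st.2 + c ≤ w) := by exact_mod_cast hct
    have hs0 : (0:ℤ) ≤ (c:ℤ)*st.1 := mul_nonneg (Int.ofNat_nonneg c) (Int.ofNat_nonneg st.1)
    have ht0 : (0:ℤ) ≤ (c:ℤ)*st.2 := mul_nonneg (Int.ofNat_nonneg c) (Int.ofNat_nonneg st.2)
    refine fill_ii a c l w ha hac hl hw ↑A (1+(c:ℤ)*st.1) (1+(c:ℤ)*st.2)
      (by linarith) (by push_cast; linarith) (by linarith) (by push_cast; linarith)
      (IFill_mono_dom (by omega) (by omega) (by omega) hFA)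
      (tri_seed (le_of_lt hac) hsubA (tri_sub_rect ha hac hl hcs hct))
  -- conclusion
  have hNval : PP D p (fun A => ¬ (∀ st ∈ K, ¬ Tk st ⊆ A)) =
      1 - ∏ st ∈ K, (1 - p ^ (Tk st).card) := by
    rw [PP_compl, hprod]
  show _ ≤ PP D p (fun A => E A ∧ F A) / PP D p F
  rw [le_div_iff₀ hFpos]
  have hstep1 : (1 - Real.exp (-((1/(4*(c:ℝ)^2)) * p ^ Kc * (w:ℝ)^2))) * PP D p F ≤
      PP D p (fun A => F A ∧ ¬ (∀ st ∈ K, ¬ Tk st ⊆ A)) := by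
    have hdepN : Dep (K.biUnion Tk) (fun A => ¬ (∀ st ∈ K, ¬ Tk st ⊆ A)) := by
      refine dep_not ?_
      intro A
      have hk' : ∀ st ∈ K, ((¬ Tk st ⊆ A) ↔ (¬ Tk st ⊆ A ∩ K.biUnion Tk)) := by
        intro st hst
        exact not_congr ((dep_inter (dep_superset (Tk st))
          (Finset.subset_biUnion_of_mem Tk hst) A).symm)
      exact ⟨fun h st hst => (hk' st hst).1 (h st hst),
        fun h st hst => (hk' st hst).2 (h st hst)⟩
    have hsubTU : K.biUnion Tk ⊆ D := Finset.biUnion_subset.2 hsubT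
    have hdisjFU : Disjoint (rectF l w w) (K.biUnion Tk) :=
      Finset.disjoint_biUnion_right _ _ _ |>.2 hdisjFT
    rw [PP_fact hsubF hsubTU hdisjFU depF hdepN, hNval]
    refine mul_le_mul_of_nonneg_right ?_ (le_of_lt hFpos) |>.trans (le_of_eq (mul_comm _ _))
    have : ∏ st ∈ K, (1 - p ^ (Tk st).card) ≤
        Real.exp (-((1/(4*(c:ℝ)^2)) * p ^ Kc * (w:ℝ)^2)) := le_trans hprodle hexp
    linarith
  exact le_trans hstep1 (PP_mono hp0' hp1' himp)

end Assembly2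

/-- **Lemma 2.7.** For `N_{c+1}^{a,c,c}`-bootstrap percolation (`b = c > a`), fix
`l, w ≥ c` and let `I = I•([l]×[w]²)`. There is `δ > 0` depending only on `a, c` such
that for `p` small enough:
(i) `ℙ_p(I•([l]×[w+1]²) | I) ≥ (1 − e^{−p l w})²`, and
(ii) `ℙ_p(I•([l+1]×[w]²) | I) ≥ 1 − exp(−δ p^{c(c+1)/2} w²)`. -/
theorem statement7 (a c : ℕ) (ha : 1 ≤ a) (hac : a < c) :
    ∃ δ : ℝ, 0 < δ ∧ ∀ l w : ℕ, c ≤ l → c ≤ w → ∃ p₀ : ℝ, 0 < p₀ ∧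
      ∀ p : ℝ, 0 < p → p < p₀ →
        (1 - Real.exp (-(p * (l : ℝ) * (w : ℝ)))) ^ 2 ≤
          PPc (rectF (l + 1) (w + 1) (w + 1)) p
            (IFill a c c (c + 1) (rect l (w + 1) (w + 1)))
            (IFill a c c (c + 1) (rect l w w)) ∧
        1 - Real.exp (-(δ * p ^ (c * (c + 1) / 2) * (w : ℝ) ^ 2)) ≤
          PPc (rectF (l + 1) (w + 1) (w + 1)) p
            (IFill a c c (c + 1) (rect (l + 1) w w))
            (IFill a c c (c + 1) (rect l w w)) := by
  have hc : (0:ℝ) < c := by exact_mod_cast (by omega : 0 < c)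
  refine ⟨1/(4*(c:ℝ)^2), by positivity, ?_⟩
  intro l w hl hw
  refine ⟨1, one_pos, ?_⟩
  intro p hp0 hp1
  exact ⟨part_i a c l w ha hac hl hw hp0 hp1, part_ii a c l w ha hac hl hw hp0 hp1⟩
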